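/- Let Y, X, A : [0,T) → ℝ be continuous with Y twice differentiable, satisfying (1/c²) Y''(t) + Y'(t) + X(t) = (1/c²) A(t) for all t ∈ [0,T), with c > 0. Then for every t ∈ [0,T): Y(t) + ∫₀ᵗ X(τ)dτ = Y(0) + (1 − e^{−c²t})/c² · Y'(0) + ∫₀ᵗ e^{−c²(t−τ)} X(τ) dτ + (1/c²)∫₀ᵗ A(τ)dτ − (1/c²)∫₀ᵗ e^{−c²(t−τ)} A(τ) dτ. -/

import Mathlib

noncomputable section
open MeasureTheory Real Set Filter
open scoped ENNReal Topology

abbrev E3 : Type := EuclideanSpace ℝ (Fin 3)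
abbrev C3 : Type := EuclideanSpace ℂ (Fin 3)

/-- Constructor for vectors in `E3`. -/
def v3 (a b c : ℝ) : E3 := (WithLp.equiv 2 (Fin 3 → ℝ)).symm ![a, b, c]

/-- Complexification of a real vector field. -/
def vC (f : E3 → E3) : E3 → C3 :=
  fun x => (WithLp.equiv 2 (Fin 3 → ℂ)).symm (fun i => (f x i : ℂ))

/-- Fourier transform of a vector field on `ℝ³`. -/
def fT (f : E3 → E3) : E3 → C3 := FourierTransform.fourier (vC f)

/-- Inverse Fourier transform. -/
def fTinv (g : E3 → C3) : E3 → C3 := FourierTransform.fourierInv g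

/-- distance to the `z`-axis (cylindrical radius). -/
def rr (x : E3) : ℝ := Real.sqrt (x 0 ^ 2 + x 1 ^ 2)

def er (x : E3) : E3 := v3 (x 0 / rr x) (x 1 / rr x) 0
def etheta (x : E3) : E3 := v3 (-(x 1) / rr x) (x 0 / rr x) 0
def ez : E3 := v3 0 0 1

def dot3 (a b : E3) : ℝ := ∑ i, a i * b i

def cross (a b : E3) : E3 :=
  v3 (a 1 * b 2 - a 2 * b 1) (a 2 * b 0 - a 0 * b 2) (a 0 * b 1 - a 1 * b 0)

/-- partial derivative in the `i`-th coordinate direction. -/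
def pd (i : Fin 3) (f : E3 → ℝ) (x : E3) : ℝ := fderiv ℝ f x (EuclideanSpace.single i 1)

def divg (F : E3 → E3) (x : E3) : ℝ := ∑ i, pd i (fun y => F y i) x

def curl (F : E3 → E3) (x : E3) : E3 :=
  v3 (pd 1 (fun y => F y 2) x - pd 2 (fun y => F y 1) x)
     (pd 2 (fun y => F y 0) x - pd 0 (fun y => F y 2) x)
     (pd 0 (fun y => F y 1) x - pd 1 (fun y => F y 0) x)

def lap (f : E3 → ℝ) (x : E3) : ℝ := ∑ i, pd i (fun y => pd i f y) x

def lapV (F : E3 → E3) (x : E3) : E3 :=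
  v3 (lap (fun y => F y 0) x) (lap (fun y => F y 1) x) (lap (fun y => F y 2) x)

def grad3 (f : E3 → ℝ) (x : E3) : E3 := v3 (pd 0 f x) (pd 1 f x) (pd 2 f x)

/-- advection term `(F·∇G)ᵢ = Σⱼ Fⱼ ∂ⱼ Gᵢ`. -/
def adv (F G : E3 → E3) (x : E3) : E3 :=
  (WithLp.equiv 2 (Fin 3 → ℝ)).symm (fun i => ∑ j, F x j * pd j (fun y => G y i) x)

/-- homogeneous Sobolev `Ẇ^{s,p}` semi-norm of a scalar function on `ℝ^d`,
defined via the Fourier multiplier `|ξ|^s`. -/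
def wsp (d : ℕ) (s p : ℝ) (f : EuclideanSpace ℝ (Fin d) → ℝ) : ℝ≥0∞ :=
  eLpNorm (FourierTransform.fourierInv fun ξ =>
      ((‖ξ‖ ^ s : ℝ) : ℂ) • FourierTransform.fourier (fun x => (f x : ℂ)) ξ)
    (ENNReal.ofReal p) volume

/-- homogeneous Sobolev `Ẇ^{s,p}` semi-norm of a vector field on `ℝ³`. -/
def wspV (s p : ℝ) (F : E3 → E3) : ℝ≥0∞ :=
  eLpNorm (fTinv fun ξ => ((‖ξ‖ ^ s : ℝ) : ℂ) • fT F ξ) (ENNReal.ofReal p) volume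

/-- homogeneous Sobolev `Ḣ^s` norm of a vector field on `ℝ³` (Plancherel form). -/
def hsNorm (s : ℝ) (F : E3 → E3) : ℝ≥0∞ :=
  (∫⁻ ξ, ENNReal.ofReal (‖ξ‖ ^ (2 * s)) * (‖fT F ξ‖₊ : ℝ≥0∞) ^ 2) ^ (1 / 2 : ℝ)

/-- dyadic weight `2^{ks}`. -/
def w2 (s : ℝ) (k : ℤ) : ℝ≥0∞ := ENNReal.ofReal ((2 : ℝ) ^ ((k : ℝ) * s))

/-- `L²` norm of the (sharp) Littlewood–Paley block of a vector field. -/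
def blockL2 (k : ℤ) (F : E3 → E3) : ℝ≥0∞ :=
  eLpNorm (fTinv fun ξ => if (2:ℝ) ^ k ≤ ‖ξ‖ ∧ ‖ξ‖ < (2:ℝ) ^ (k + 1) then fT F ξ else 0)
    2 volume

/-- homogeneous Besov `Ḃ^s_{2,q}` norm. -/
def besov (s : ℝ) (q : ℝ≥0∞) (F : E3 → E3) : ℝ≥0∞ :=
  if q = ∞ then ⨆ k : ℤ, w2 s k * blockL2 k F
  else (∑' k : ℤ, (w2 s k * blockL2 k F) ^ q.toReal) ^ (1 / q.toReal)

/-- time-Lebesgue norm over a time set `S` of an `ℝ≥0∞`-valued quantity. -/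
def tLp (S : Set ℝ) (m : ℝ≥0∞) (g : ℝ → ℝ≥0∞) : ℝ≥0∞ :=
  if m = ∞ then ⨆ t ∈ S, g t
  else (∫⁻ t in S, g t ^ m.toReal) ^ (1 / m.toReal)

/-- Chemin–Lerner norm `L̃^m(S; Ḃ^s_{2,q})`. -/
def clNorm (S : Set ℝ) (m : ℝ≥0∞) (s : ℝ) (q : ℝ≥0∞) (B : ℝ → E3 → E3) : ℝ≥0∞ :=
  if q = ∞ then ⨆ k : ℤ, w2 s k * tLp S m (fun t => blockL2 k (B t))
  else (∑' k : ℤ, (w2 s k * tLp S m (fun t => blockL2 k (B t))) ^ q.toReal) ^ (1 / q.toReal)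

/-- `(-Δ)⁻¹` for scalar functions, via the Fourier multiplier `1/(4π²|ξ|²)`. -/
def invNegLapS (f : E3 → ℝ) (x : E3) : ℝ :=
  (FourierTransform.fourierInv (fun ξ => ((1 / (4 * π ^ 2 * ‖ξ‖ ^ 2) : ℝ) : ℂ) •
      FourierTransform.fourier (fun y => (f y : ℂ)) ξ) x).re

/-- Leray projector `P = Id - ∇Δ⁻¹ div = Id + ∇(-Δ)⁻¹ div`. -/
def leray (F : E3 → E3) (x : E3) : E3 :=
  F x + grad3 (invNegLapS (divg F)) x

/-- time derivative of a time-dependent vector field. -/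
def dtV (F : ℝ → E3 → E3) (t : ℝ) (x : E3) : E3 :=
  v3 (deriv (fun s => F s x 0) t) (deriv (fun s => F s x 1) t) (deriv (fun s => F s x 2) t)

/-- second time derivative of a time-dependent vector field. -/
def dttV (F : ℝ → E3 → E3) (t : ℝ) (x : E3) : E3 :=
  v3 (deriv (deriv fun s => F s x 0) t) (deriv (deriv fun s => F s x 1) t)
     (deriv (deriv fun s => F s x 2) t)

/-- joint smoothness of a time-dependent vector field. -/
def SmoothTF (F : ℝ → E3 → E3) : Prop := ContDiff ℝ (⊤ : ℕ∞) (fun p : ℝ × E3 => F p.1 p.2)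

/-- directional derivative `(v·∇)H` of a vector field. -/
def dirD (H : E3 → E3) (x v : E3) : E3 :=
  v3 (fderiv ℝ (fun y => H y 0) x v) (fderiv ℝ (fun y => H y 1) x v)
     (fderiv ℝ (fun y => H y 2) x v)


/-- Duhamel-type identity for the damped ODE
`(1/c²)Y'' + Y' + X = (1/c²)A` on `[0,T)`. -/
theorem damped_ode_duhamel (T : ℝ≥0∞) (hT : 0 < T) (c : ℝ) (hc : 0 < c)
    (Y Y' Y'' X A : ℝ → ℝ)
    (hY : ∀ t : ℝ, 0 ≤ t → ENNReal.ofReal t < T → HasDerivAt Y (Y' t) t)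
    (hY' : ∀ t : ℝ, 0 ≤ t → ENNReal.ofReal t < T → HasDerivAt Y' (Y'' t) t)
    (hX : ContinuousOn X {t : ℝ | 0 ≤ t ∧ ENNReal.ofReal t < T})
    (hA : ContinuousOn A {t : ℝ | 0 ≤ t ∧ ENNReal.ofReal t < T})
    (heq : ∀ t : ℝ, 0 ≤ t → ENNReal.ofReal t < T →
      (1 / c ^ 2) * Y'' t + Y' t + X t = (1 / c ^ 2) * A t) :
    ∀ t : ℝ, 0 ≤ t → ENNReal.ofReal t < T →
      Y t + ∫ τ in (0:ℝ)..t, X τ =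
        Y 0 + ((1 - Real.exp (-(c ^ 2) * t)) / c ^ 2) * Y' 0
          + (∫ τ in (0:ℝ)..t, Real.exp (-(c ^ 2) * (t - τ)) * X τ)
          + (1 / c ^ 2) * (∫ τ in (0:ℝ)..t, A τ)
          - (1 / c ^ 2) * ∫ τ in (0:ℝ)..t, Real.exp (-(c ^ 2) * (t - τ)) * A τ := by
  intro t ht0 htT
  have hc2 : (c:ℝ) ^ 2 ≠ 0 := by positivity
  have hmem : ∀ s ∈ Set.uIcc (0:ℝ) t, 0 ≤ s ∧ ENNReal.ofReal s < T := by
    intro s hs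
    rw [Set.uIcc_of_le ht0] at hs
    exact ⟨hs.1, lt_of_le_of_lt (ENNReal.ofReal_le_ofReal hs.2) htT⟩
  have hXc : ContinuousOn X (Set.uIcc (0:ℝ) t) := hX.mono (fun s hs => hmem s hs)
  have hAc : ContinuousOn A (Set.uIcc (0:ℝ) t) := hA.mono (fun s hs => hmem s hs)
  have hY'c : ContinuousOn Y' (Set.uIcc (0:ℝ) t) := fun s hs =>
    ((hY' s (hmem s hs).1 (hmem s hs).2).continuousAt).continuousWithinAt
  have heq' : ∀ s : ℝ, 0 ≤ s → ENNReal.ofReal s < T →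
      Y'' s = A s - c ^ 2 * Y' s - c ^ 2 * X s := by
    intro s h1 h2
    have h := heq s h1 h2
    field_simp at h
    linarith
  have iX : IntervalIntegrable X volume 0 t := hXc.intervalIntegrable
  have iA : IntervalIntegrable A volume 0 t := hAc.intervalIntegrable
  have iY' : IntervalIntegrable Y' volume 0 t := hY'c.intervalIntegrable
  -- FTC for Y
  have ftc1 : ∫ τ in (0:ℝ)..t, Y' τ = Y t - Y 0 :=
    intervalIntegral.integral_eq_sub_of_hasDerivAt
      (fun s hs => hY s (hmem s hs).1 (hmem s hs).2) iY'
  -- FTC for Y'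
  have hY''c : ContinuousOn Y'' (Set.uIcc (0:ℝ) t) := by
    have h : ContinuousOn (fun s => A s - c ^ 2 * Y' s - c ^ 2 * X s) (Set.uIcc (0:ℝ) t) :=
      (hAc.sub (continuousOn_const.mul hY'c)).sub (continuousOn_const.mul hXc)
    exact h.congr (fun s hs => heq' s (hmem s hs).1 (hmem s hs).2)
  have ftc2 : ∫ τ in (0:ℝ)..t, Y'' τ = Y' t - Y' 0 :=
    intervalIntegral.integral_eq_sub_of_hasDerivAt
      (fun s hs => hY' s (hmem s hs).1 (hmem s hs).2) hY''c.intervalIntegrable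
  have hsplit : ∫ τ in (0:ℝ)..t, Y'' τ
      = (∫ τ in (0:ℝ)..t, A τ) - c ^ 2 * (∫ τ in (0:ℝ)..t, Y' τ)
        - c ^ 2 * (∫ τ in (0:ℝ)..t, X τ) := by
    have h1 : ∫ τ in (0:ℝ)..t, Y'' τ
        = ∫ τ in (0:ℝ)..t, (A τ - c ^ 2 * Y' τ - c ^ 2 * X τ) :=
      intervalIntegral.integral_congr (fun s hs => heq' s (hmem s hs).1 (hmem s hs).2)
    rw [h1, intervalIntegral.integral_sub (iA.sub (iY'.const_mul _)) (iX.const_mul _),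
      intervalIntegral.integral_sub iA (iY'.const_mul _),
      intervalIntegral.integral_const_mul, intervalIntegral.integral_const_mul]
  have eq1 : Y' t - Y' 0
      = (∫ τ in (0:ℝ)..t, A τ) - c ^ 2 * (Y t - Y 0) - c ^ 2 * (∫ τ in (0:ℝ)..t, X τ) := by
    rw [← ftc1, ← ftc2]; exact hsplit
  -- integrating factor
  have hec : ContinuousOn (fun τ : ℝ => Real.exp (c ^ 2 * τ)) (Set.uIcc (0:ℝ) t) :=
    (Real.continuous_exp.comp (continuous_const.mul continuous_id)).continuousOn
  have hZ : ∀ s ∈ Set.uIcc (0:ℝ) t,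
      HasDerivAt (fun τ => Real.exp (c ^ 2 * τ) * Y' τ)
        (Real.exp (c ^ 2 * s) * A s - c ^ 2 * (Real.exp (c ^ 2 * s) * X s)) s := by
    intro s hs
    have he : HasDerivAt (fun τ : ℝ => Real.exp (c ^ 2 * τ))
        (Real.exp (c ^ 2 * s) * (c ^ 2 * 1)) s := ((hasDerivAt_id s).const_mul (c ^ 2)).exp
    have h := he.fun_mul (hY' s (hmem s hs).1 (hmem s hs).2)
    refine h.congr_deriv ?_
    rw [heq' s (hmem s hs).1 (hmem s hs).2]
    ring
  have ftc3 : ∫ τ in (0:ℝ)..t, (Real.exp (c ^ 2 * τ) * A τ - c ^ 2 * (Real.exp (c ^ 2 * τ) * X τ))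
      = Real.exp (c ^ 2 * t) * Y' t - Y' 0 := by
    have h := intervalIntegral.integral_eq_sub_of_hasDerivAt hZ
      (((hec.mul hAc).sub (continuousOn_const.mul (hec.mul hXc))).intervalIntegrable)
    simpa using h
  have iEA : IntervalIntegrable (fun τ => Real.exp (c ^ 2 * τ) * A τ) volume 0 t :=
    (hec.mul hAc).intervalIntegrable
  have iEX : IntervalIntegrable (fun τ => Real.exp (c ^ 2 * τ) * X τ) volume 0 t :=
    (hec.mul hXc).intervalIntegrable
  have eq2 : (∫ τ in (0:ℝ)..t, Real.exp (c ^ 2 * τ) * A τ)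
      - c ^ 2 * (∫ τ in (0:ℝ)..t, Real.exp (c ^ 2 * τ) * X τ)
      = Real.exp (c ^ 2 * t) * Y' t - Y' 0 := by
    rw [← intervalIntegral.integral_const_mul, ← intervalIntegral.integral_sub iEA
      (iEX.const_mul _)]
    exact ftc3
  -- rewrite the exponential convolution integrals
  have key : ∀ f : ℝ → ℝ, (∫ τ in (0:ℝ)..t, Real.exp (-(c ^ 2) * (t - τ)) * f τ)
      = (Real.exp (c ^ 2 * t))⁻¹ * ∫ τ in (0:ℝ)..t, Real.exp (c ^ 2 * τ) * f τ := by
    intro f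
    rw [← intervalIntegral.integral_const_mul]
    apply intervalIntegral.integral_congr
    intro s _
    show Real.exp (-(c ^ 2) * (t - s)) * f s
      = (Real.exp (c ^ 2 * t))⁻¹ * (Real.exp (c ^ 2 * s) * f s)
    rw [← mul_assoc, ← Real.exp_neg, ← Real.exp_add]
    congr 2
    ring
  rw [key X, key A, show Real.exp (-(c ^ 2) * t) = (Real.exp (c ^ 2 * t))⁻¹ by
    rw [neg_mul, Real.exp_neg]]
  have hEne : Real.exp (c ^ 2 * t) ≠ 0 := (Real.exp_pos _).ne'
  have hY't : Y' t = (Real.exp (c ^ 2 * t))⁻¹ * (Y' 0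
      + ((∫ τ in (0:ℝ)..t, Real.exp (c ^ 2 * τ) * A τ)
        - c ^ 2 * (∫ τ in (0:ℝ)..t, Real.exp (c ^ 2 * τ) * X τ))) := by
    field_simp
    linarith [eq2]
  have hc1 : c * c⁻¹ = 1 := mul_inv_cancel₀ hc.ne'
  linear_combination (1 / c ^ 2) * eq1 - (1 / c ^ 2) * hY't
    - ((c * c⁻¹ + 1) * (Y t + (∫ τ in (0:ℝ)..t, X τ) - Y 0
        - (Real.exp (c ^ 2 * t))⁻¹ * ∫ τ in (0:ℝ)..t, Real.exp (c ^ 2 * τ) * X τ)) * hc1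

end
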